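/- arXiv:math-ph/9807021 — 2 statements merged into one kernel-verified Lean document; each statement's English description precedes it below -/
import Mathlib

section
/- For smooth periodic functions u, w on the circle, define B(w,u) = (1 - ∂²)⁻¹(2u'(1-∂²)w + u(1-∂²)w'), i.e., B(w,u) is the unique smooth periodic function with (1-∂²)B(w,u) = 2u'(w - w'') + u(w' - w'''). Then for all smooth periodic v, ∫ (B(w,u) v + B(w,u)' v') dx = ∫ ((-uv'+u'v)w + (-uv'+u'v)'w') dx. -/
open Real intervalIntegral

lemma per_deriv {f : ℝ → ℝ} {p : ℝ} (hf : Function.Periodic f p) :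
    Function.Periodic (deriv f) p := by
  intro x
  have h : (fun y => f (y + p)) = f := funext hf
  rw [← deriv_comp_add_const, h]

lemma per_iter {f : ℝ → ℝ} {p : ℝ} (hf : Function.Periodic f p) (n : ℕ) :
    Function.Periodic (iteratedDeriv n f) p := by
  induction n with
  | zero => simpa using hf
  | succ n ih => rw [iteratedDeriv_succ]; exact per_deriv ih

lemma smooth_iter {f : ℝ → ℝ} (hf : ContDiff ℝ (⊤ : ℕ∞) f) (n : ℕ) :
    ContDiff ℝ (⊤ : ℕ∞) (iteratedDeriv n f) := by
  induction n with
  | zero => simpa using hf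
  | succ n ih => rw [iteratedDeriv_succ]; exact (contDiff_infty_iff_deriv.mp ih).2

lemma int_deriv_zero {f : ℝ → ℝ} (hf : ContDiff ℝ (⊤ : ℕ∞) f)
    (hfp : Function.Periodic f (2 * π)) :
    ∫ x in (0:ℝ)..(2 * π), deriv f x = 0 := by
  rw [intervalIntegral.integral_deriv_eq_sub
    (fun x _ => (hf.differentiable (by norm_num)).differentiableAt)
    (((contDiff_infty_iff_deriv.mp hf).2.continuous).intervalIntegrable _ _)]
  have := hfp 0
  simp at this
  simp [this]

lemma hda {f : ℝ → ℝ} (hf : ContDiff ℝ (⊤ : ℕ∞) f) (n : ℕ) (x : ℝ) :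
    HasDerivAt (iteratedDeriv n f) (iteratedDeriv (n + 1) f x) x := by
  rw [iteratedDeriv_succ]
  exact ((smooth_iter hf n).differentiable (by norm_num)).differentiableAt.hasDerivAt

theorem stmt_1 (u w B : ℝ → ℝ)
    (hu : ContDiff ℝ (⊤ : ℕ∞) u) (hw : ContDiff ℝ (⊤ : ℕ∞) w) (hB : ContDiff ℝ (⊤ : ℕ∞) B)
    (hup : Function.Periodic u (2 * π)) (hwp : Function.Periodic w (2 * π))
    (hBp : Function.Periodic B (2 * π))
    (hBdef : ∀ x, B x - iteratedDeriv 2 B x =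
      2 * deriv u x * (w x - iteratedDeriv 2 w x) +
        u x * (deriv w x - iteratedDeriv 3 w x)) :
    ∀ v : ℝ → ℝ, ContDiff ℝ (⊤ : ℕ∞) v → Function.Periodic v (2 * π) →
      (∫ x in (0:ℝ)..(2 * π), (B x * v x + deriv B x * deriv v x)) =
      ∫ x in (0:ℝ)..(2 * π),
        ((-u x * deriv v x + deriv u x * v x) * w x +
          deriv (fun y => -u y * deriv v y + deriv u y * v y) x * deriv w x) := by
  intro v hv hvp
  have hu' : ContDiff ℝ (⊤ : ℕ∞) u := hu.of_le (by simp)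
  have hw' : ContDiff ℝ (⊤ : ℕ∞) w := hw.of_le (by simp)
  have hB' : ContDiff ℝ (⊤ : ℕ∞) B := hB.of_le (by simp)
  have hv' : ContDiff ℝ (⊤ : ℕ∞) v := hv.of_le (by simp)
  have du : ∀ x, HasDerivAt u (deriv u x) x := fun x => by
    simpa [iteratedDeriv_one] using hda hu' 0 x
  have dw : ∀ x, HasDerivAt w (deriv w x) x := fun x => by
    simpa [iteratedDeriv_one] using hda hw' 0 x
  have dv : ∀ x, HasDerivAt v (deriv v x) x := fun x => by
    simpa [iteratedDeriv_one] using hda hv' 0 x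
  have dB : ∀ x, HasDerivAt B (deriv B x) x := fun x => by
    simpa [iteratedDeriv_one] using hda hB' 0 x
  have du2 : ∀ x, HasDerivAt (deriv u) (iteratedDeriv 2 u x) x := fun x => by
    simpa [iteratedDeriv_one] using hda hu' 1 x
  have dv2 : ∀ x, HasDerivAt (deriv v) (iteratedDeriv 2 v x) x := fun x => by
    simpa [iteratedDeriv_one] using hda hv' 1 x
  have dw2 : ∀ x, HasDerivAt (deriv w) (iteratedDeriv 2 w x) x := fun x => by
    simpa [iteratedDeriv_one] using hda hw' 1 x
  have dB2 : ∀ x, HasDerivAt (deriv B) (iteratedDeriv 2 B x) x := fun x => by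
    simpa [iteratedDeriv_one] using hda hB' 1 x
  have dw3 : ∀ x, HasDerivAt (iteratedDeriv 2 w) (iteratedDeriv 3 w x) x := fun x =>
    hda hw' 2 x
  -- derivative of m = -u v' + u' v
  have hm : ∀ x, HasDerivAt (fun y => -u y * deriv v y + deriv u y * v y)
      (-u x * iteratedDeriv 2 v x + iteratedDeriv 2 u x * v x) x := by
    intro x
    have h := (((du x).neg).mul (dv2 x)).add ((du2 x).mul (dv x))
    refine h.congr_deriv ?_; simp only [Pi.neg_apply]
    ring
  have hmderiv : ∀ x, deriv (fun y => -u y * deriv v y + deriv u y * v y) x =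
      -u x * iteratedDeriv 2 v x + iteratedDeriv 2 u x * v x := fun x => (hm x).deriv
  -- the auxiliary function G
  set G : ℝ → ℝ := fun x => deriv B x * v x + u x * ((w x - iteratedDeriv 2 w x) * v x)
      - (-u x * deriv v x + deriv u x * v x) * deriv w x with hG
  have hGd : ∀ x, HasDerivAt G
      (iteratedDeriv 2 B x * v x + deriv B x * deriv v x +
        (deriv u x * ((w x - iteratedDeriv 2 w x) * v x) +
          u x * ((deriv w x - iteratedDeriv 3 w x) * v x +
            (w x - iteratedDeriv 2 w x) * deriv v x)) -
        ((-u x * iteratedDeriv 2 v x + iteratedDeriv 2 u x * v x) * deriv w x +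
          (-u x * deriv v x + deriv u x * v x) * iteratedDeriv 2 w x)) x := by
    intro x
    exact (((dB2 x).mul (dv x)).add ((du x).mul
        (((dw x).sub (dw3 x)).mul (dv x)))).sub ((hm x).mul (dw2 x))
  -- pointwise identity
  have key : ∀ x, (B x * v x + deriv B x * deriv v x) -
      ((-u x * deriv v x + deriv u x * v x) * w x +
        deriv (fun y => -u y * deriv v y + deriv u y * v y) x * deriv w x) =
      deriv G x := by
    intro x
    rw [(hGd x).deriv, hmderiv x]
    linear_combination v x * hBdef x
  -- smoothness and periodicity of G
  have hGs : ContDiff ℝ (⊤ : ℕ∞) G := by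
    have h1 := (contDiff_infty_iff_deriv.mp hB').2
    have h2 := (contDiff_infty_iff_deriv.mp hu').2
    have h3 := (contDiff_infty_iff_deriv.mp hv').2
    have h4 := (contDiff_infty_iff_deriv.mp hw').2
    exact ((h1.mul hv').add (hu'.mul ((hw'.sub (smooth_iter hw' 2)).mul hv'))).sub
      ((((hu'.neg.mul h3).add (h2.mul hv'))).mul h4)
  have hGp : Function.Periodic G (2 * π) := by
    intro x
    simp only [hG, per_deriv hBp x, per_deriv hup x, per_deriv hvp x, per_deriv hwp x,
      per_iter hwp 2 x, hup x, hvp x, hwp x, hBp x]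
  -- continuity of integrands
  have cu := hu'.continuous
  have cw := hw'.continuous
  have cv := hv'.continuous
  have cB := hB'.continuous
  have cu1 := (contDiff_infty_iff_deriv.mp hu').2.continuous
  have cv1 := (contDiff_infty_iff_deriv.mp hv').2.continuous
  have cw1 := (contDiff_infty_iff_deriv.mp hw').2.continuous
  have cB1 := (contDiff_infty_iff_deriv.mp hB').2.continuous
  have cu2 := (smooth_iter hu' 2).continuous
  have cv2 := (smooth_iter hv' 2).continuous
  have int1 : IntervalIntegrable (fun x => B x * v x + deriv B x * deriv v x)
      MeasureTheory.volume 0 (2 * π) :=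
    ((cB.mul cv).add (cB1.mul cv1)).intervalIntegrable _ _
  have int2 : IntervalIntegrable (fun x =>
      (-u x * deriv v x + deriv u x * v x) * w x +
        deriv (fun y => -u y * deriv v y + deriv u y * v y) x * deriv w x)
      MeasureTheory.volume 0 (2 * π) := by
    have : Continuous (fun x =>
        (-u x * deriv v x + deriv u x * v x) * w x +
          (-u x * iteratedDeriv 2 v x + iteratedDeriv 2 u x * v x) * deriv w x) :=
      (((cu.neg.mul cv1).add (cu1.mul cv)).mul cw).add
        (((cu.neg.mul cv2).add (cu2.mul cv)).mul cw1)
    exact (this.congr fun x => by rw [hmderiv x]).intervalIntegrable _ _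
  have hzero : ∫ x in (0:ℝ)..(2 * π), deriv G x = 0 := int_deriv_zero hGs hGp
  have := intervalIntegral.integral_sub int1 int2
  rw [intervalIntegral.integral_congr (g := fun x => deriv G x)
      (fun x _ => key x), hzero] at this
  linarith [this]
end

section
/- For any smooth 2π-periodic function f, there exists a unique smooth 2π-periodic function g with g - g'' = f; i.e., the operator 1 - ∂² is a bijection on smooth periodic functions. -/
open Real Set MeasureTheory Filter Function
open scoped ENNReal NNReal Topology ContDiff

lemma contDiff_top_of_primitive {F h : ℝ → ℝ} (hF : ∀ y, HasDerivAt F (h y) y)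
    (hh : ContDiff ℝ (⊤ : ℕ∞) h) : ContDiff ℝ (⊤ : ℕ∞) F := by
  have hd : deriv F = h := funext fun y => (hF y).deriv
  exact contDiff_infty_iff_deriv.2 ⟨fun y => (hF y).differentiableAt, by rw [hd]; exact hh⟩

lemma integral_Iic_shift (φ : ℝ → ℝ) (x c : ℝ) :
    ∫ y in Iic (x + c), φ y = ∫ y in Iic x, φ (y + c) := by
  rw [← integral_indicator measurableSet_Iic, ← integral_indicator measurableSet_Iic,
    ← integral_add_right_eq_self (fun y => (Iic (x+c)).indicator φ y) c]
  congr 1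
  funext z
  by_cases h : z ≤ x <;>
    simp [Set.indicator_apply, h, add_le_add_iff_right]

lemma hasDerivAt_expInt (φ : ℝ → ℝ) (hφ : Continuous φ) (C : ℝ) (hC : ∀ y, |φ y| ≤ C)
    (x : ℝ) : HasDerivAt (fun x => ∫ y in Iic x, exp y * φ y) (exp x * φ x) x := by
  have hint : ∀ b : ℝ, IntegrableOn (fun y => exp y * φ y) (Iic b) := by
    intro b
    apply Integrable.mono' ((integrableOn_exp_Iic b).const_mul C)
      ((continuous_exp.mul hφ).aestronglyMeasurable)
    filter_upwards with y
    rw [Real.norm_eq_abs, Pi.mul_apply, abs_mul, abs_of_pos (exp_pos y)]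
    calc exp y * |φ y| ≤ exp y * C := by gcongr; exact hC y
      _ = C * exp y := by ring
  have heq : (fun x => ∫ y in Iic x, exp y * φ y)
      = fun x => (∫ y in Iic (0:ℝ), exp y * φ y) + ∫ y in (0:ℝ)..x, exp y * φ y := by
    funext b
    have := intervalIntegral.integral_Iic_sub_Iic (hint 0) (hint b)
    linarith
  rw [heq]
  exact (((continuous_exp.mul hφ).integral_hasStrictDerivAt 0 x).hasDerivAt).const_add _

lemma zero_of_ode {u : ℝ → ℝ} (hu : ContDiff ℝ (⊤ : ℕ∞) u) (hup : Function.Periodic u (2*π))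
    (hode : ∀ x, deriv (deriv u) x = u x) : ∀ x, u x = 0 := by
  have hud : Differentiable ℝ u := hu.differentiable (by simp)
  have h1 := contDiff_infty_iff_deriv.1 (hu.of_le (by simp))
  have hud' : Differentiable ℝ (deriv u) := (contDiff_infty_iff_deriv.1 h1.2).1
  have hup' : Function.Periodic (deriv u) (2*π) := by
    intro x
    have hfun : (fun y => u (y + 2*π)) = u := funext fun y => hup y
    calc deriv u (x + 2*π) = deriv (fun y => u (y + 2*π)) x :=
          (deriv_comp_add_const u (2*π) x).symm
      _ = deriv u x := by rw [hfun]
  set ψ : ℝ → ℝ := fun x => u x * deriv u x with hψ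
  have hψ' : ∀ x, HasDerivAt ψ (deriv u x * deriv u x + u x * u x) x := by
    intro x
    have h2 := ((hud x).hasDerivAt.mul (hud' x).hasDerivAt)
    refine h2.congr_deriv (Eq.symm ?_)
    rw [hode x]
  have hmono : Monotone ψ := monotone_of_hasDerivAt_nonneg hψ'
    (fun x => add_nonneg (mul_self_nonneg _) (mul_self_nonneg _))
  have hψp : Function.Periodic ψ (2*π) := hup.mul hup'
  have hTpos : (0:ℝ) < 2*π := by positivity
  have hconst : ∀ x, ψ x = ψ 0 := by
    intro x
    obtain ⟨n, hn⟩ := exists_nat_ge ((-x) / (2*π))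
    have hxn : 0 ≤ x + (n:ℝ) * (2*π) := by
      have := (div_le_iff₀ hTpos).1 hn; linarith
    obtain ⟨m, hm⟩ := exists_nat_ge (x / (2*π))
    have hxm : x ≤ (m:ℝ) * (2*π) := by
      have := (div_le_iff₀ hTpos).1 hm; linarith
    have e1 : ψ (x + (n:ℝ) * (2*π)) = ψ x := (hψp.nat_mul n) x
    have e2 : ψ ((m:ℝ) * (2*π)) = ψ 0 := hψp.nat_mul_eq m
    have i1 : ψ 0 ≤ ψ x := by rw [← e1]; exact hmono hxn
    have i2 : ψ x ≤ ψ 0 := by rw [← e2]; exact hmono hxm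
    linarith
  intro x
  have h0 : HasDerivAt ψ 0 x := by
    have hcf : ψ = fun _ => ψ 0 := funext hconst
    rw [hcf]
    exact hasDerivAt_const x _
  have heq0 := (hψ' x).unique h0
  have h2 : u x * u x = 0 := by nlinarith [mul_self_nonneg (u x), mul_self_nonneg (deriv u x)]
  exact mul_self_eq_zero.mp h2

theorem stmt_2 (f : ℝ → ℝ) (hf : ContDiff ℝ (⊤ : ℕ∞) f) (hfp : Function.Periodic f (2 * π)) :
    ∃! g : ℝ → ℝ, ContDiff ℝ (⊤ : ℕ∞) g ∧ Function.Periodic g (2 * π) ∧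
      ∀ x, g x - iteratedDeriv 2 g x = f x := by
  have hfc : Continuous f := hf.continuous
  have hTpos : (0:ℝ) < 2*π := by positivity
  obtain ⟨C, hC⟩ : ∃ C, ∀ x, |f x| ≤ C := by
    obtain ⟨C, hC⟩ := isBounded_iff_forall_norm_le.1
      (hfp.isBounded_of_continuous hTpos.ne' hfc)
    exact ⟨C, fun x => hC (f x) (mem_range_self x)⟩
  set A : ℝ → ℝ := fun x => ∫ y in Iic x, exp y * f y with hA
  set D : ℝ → ℝ := fun x => ∫ y in Iic x, exp y * f (-y) with hD
  set B : ℝ → ℝ := fun x => D (-x) with hB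
  have hA' : ∀ x, HasDerivAt A (exp x * f x) x := hasDerivAt_expInt f hfc C hC
  have hfnc : Continuous (fun y => f (-y)) := hfc.comp continuous_neg
  have hD' : ∀ x, HasDerivAt D (exp x * f (-x)) x :=
    hasDerivAt_expInt _ hfnc C (fun y => hC (-y))
  have hB' : ∀ x, HasDerivAt B (-(exp (-x) * f x)) x := by
    intro x
    have h2 := (hD' (-x)).comp x ((hasDerivAt_id x).neg)
    refine h2.congr_deriv (Eq.symm ?_)
    simp [neg_neg]
  set g : ℝ → ℝ := fun x => (exp (-x) * A x + exp x * B x) / 2 with hg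
  set g1 : ℝ → ℝ := fun x => (exp x * B x - exp (-x) * A x) / 2 with hg1
  have hexpneg : ∀ x : ℝ, HasDerivAt (fun x : ℝ => exp (-x)) (-exp (-x)) x := fun x => by
    simpa [Function.comp_def] using (Real.hasDerivAt_exp (-x)).comp x ((hasDerivAt_id x).neg)
  have hg' : ∀ x, HasDerivAt g (g1 x) x := by
    intro x
    have h1 := (hexpneg x).mul (hA' x)
    have h2 := (Real.hasDerivAt_exp x).mul (hB' x)
    have h3 := (h1.add h2).div_const 2
    refine h3.congr_deriv (Eq.symm ?_)
    rw [hg1]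
    ring
  have hg1' : ∀ x, HasDerivAt g1 (g x - f x) x := by
    intro x
    have h1 := (Real.hasDerivAt_exp x).mul (hB' x)
    have h2 := (hexpneg x).mul (hA' x)
    have h3 := (h1.sub h2).div_const 2
    refine h3.congr_deriv (Eq.symm ?_)
    rw [hg]
    have hxx : rexp x * rexp (-x) = 1 := by rw [← Real.exp_add]; simp
    linear_combination (f x) * hxx
  -- smoothness
  have hAc : ContDiff ℝ (⊤ : ℕ∞) A :=
    contDiff_top_of_primitive hA' (Real.contDiff_exp.mul hf)
  have hDc : ContDiff ℝ (⊤ : ℕ∞) D :=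
    contDiff_top_of_primitive hD' (Real.contDiff_exp.mul (hf.comp contDiff_neg))
  have hBc : ContDiff ℝ (⊤ : ℕ∞) B := hDc.comp contDiff_neg
  have hgc : ContDiff ℝ (⊤ : ℕ∞) g :=
    (((Real.contDiff_exp.comp contDiff_neg).mul hAc).add
      (Real.contDiff_exp.mul hBc)).div_const 2
  -- periodicity
  have hApd : ∀ x, A (x + 2*π) = exp (2*π) * A x := by
    intro x
    rw [hA]
    simp only []
    rw [integral_Iic_shift]
    have hpe : ∀ y : ℝ, exp (y + 2*π) * f (y + 2*π) = exp (2*π) * (exp y * f y) := by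
      intro y
      rw [Real.exp_add, hfp y]
      ring
    simp_rw [hpe]
    rw [MeasureTheory.integral_const_mul]
  have hDpd : ∀ x, D (x + -(2*π)) = exp (-(2*π)) * D x := by
    intro x
    rw [hD]
    simp only []
    rw [integral_Iic_shift]
    have hpe : ∀ y : ℝ, exp (y + -(2*π)) * f (-(y + -(2*π)))
        = exp (-(2*π)) * (exp y * f (-y)) := by
      intro y
      have : -(y + -(2*π)) = -y + 2*π := by ring
      rw [this, Real.exp_add, hfp (-y)]
      ring
    simp_rw [hpe]
    rw [MeasureTheory.integral_const_mul]
  have hBpd : ∀ x, B (x + 2*π) = exp (-(2*π)) * B x := by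
    intro x
    rw [hB]
    simp only []
    have : -(x + 2*π) = -x + -(2*π) := by ring
    rw [this, hDpd (-x)]
  have hgpd : Function.Periodic g (2*π) := by
    intro x
    rw [hg]
    simp only []
    rw [hApd, hBpd]
    have e1 : rexp (-(x + 2*π)) * rexp (2*π) = rexp (-x) := by
      rw [← Real.exp_add]; ring_nf
    have e2 : rexp (x + 2*π) * rexp (-(2*π)) = rexp x := by
      rw [← Real.exp_add]; ring_nf
    linear_combination (A x / 2) * e1 + (B x / 2) * e2
  -- the equation
  have hdg : deriv g = g1 := funext fun x => (hg' x).deriv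
  have hfix : ∀ x, g x - iteratedDeriv 2 g x = f x := by
    intro x
    have h2 : iteratedDeriv 2 g x = g x - f x := by
      rw [show (2:ℕ) = 1 + 1 from rfl, iteratedDeriv_succ, iteratedDeriv_one, hdg]
      exact (hg1' x).deriv
    rw [h2]
    ring
  refine ⟨g, ⟨hgc, hgpd, hfix⟩, ?_⟩
  rintro y ⟨hyc, hyp, hy⟩
  have hyd : Differentiable ℝ y := hyc.differentiable (by simp)
  have hy2 := contDiff_infty_iff_deriv.1 (hyc.of_le (by simp))
  have hyd' : Differentiable ℝ (deriv y) := (contDiff_infty_iff_deriv.1 hy2.2).1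
  have hgd : Differentiable ℝ g := hgc.differentiable (by simp)
  have hg2 := contDiff_infty_iff_deriv.1 (hgc.of_le (by simp))
  have hgd' : Differentiable ℝ (deriv g) := (contDiff_infty_iff_deriv.1 hg2.2).1
  have hode : ∀ x, deriv (deriv (fun x => y x - g x)) x = y x - g x := by
    intro x
    have e1 : deriv (fun x => y x - g x) = fun x => deriv y x - deriv g x :=
      funext fun z => deriv_sub (hyd z) (hgd z)
    rw [e1, deriv_fun_sub (hyd' x) (hgd' x)]
    have i2y : deriv (deriv y) x = iteratedDeriv 2 y x := by
      rw [show (2:ℕ) = 1 + 1 from rfl, iteratedDeriv_succ, iteratedDeriv_one]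
    have i2g : deriv (deriv g) x = iteratedDeriv 2 g x := by
      rw [show (2:ℕ) = 1 + 1 from rfl, iteratedDeriv_succ, iteratedDeriv_one]
    have := hy x
    have := hfix x
    rw [i2y, i2g]
    linarith
  have hzero := zero_of_ode (hyc.sub hgc) (hyp.sub hgpd) hode
  funext x
  have := hzero x
  linarith
end
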